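/- arXiv:0909.5322 — 5 statements merged into one kernel-verified Lean document; each statement's English description precedes it below -/
import Mathlib

section
/- Let (p, ω) be a symplectic vector space and A₁, A₂ ∈ sp(p, ω). Define R_{A₁∧A₂}(x,y) := (1/2)((A₁x) ∘ (A₂y) − (A₁y) ∘ (A₂x)), where (u ∘ v)(z) := ω(u,z)v + ω(v,z)u. Then R_{A₁∧A₂} satisfies the first Bianchi identity: R_{A₁∧A₂}(x,y)z + R_{A₁∧A₂}(y,z)x + R_{A₁∧A₂}(z,x)y = 0 for all x, y, z ∈ p. -/
theorem LinearMap.IsAlt.apply_comm_of_skew {R M : Type*} [CommRing R] [AddCommGroup M]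
    [Module R M] {ω : M →ₗ[R] M →ₗ[R] R} (hω : ω.IsAlt) {A : Module.End R M}
    (hA : ∀ u v, ω (A u) v + ω u (A v) = 0) (u v : M) :
    ω (A u) v = ω (A v) u :=
  (eq_neg_of_add_eq_zero_left (hA u v)).trans (hω.neg u (A v))

theorem stmt3_general
    {p : Type*} [AddCommGroup p] [Module ℝ p]
    (ω : p →ₗ[ℝ] p →ₗ[ℝ] ℝ)
    (hωalt : ∀ v, ω v v = 0)
    (A₁ A₂ : Module.End ℝ p)
    (hA₁ : ∀ u v, ω (A₁ u) v + ω u (A₁ v) = 0)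
    (hA₂ : ∀ u v, ω (A₂ u) v + ω u (A₂ v) = 0)
    (Rm : p → p → p → p)
    (hRm : ∀ x y z, Rm x y z =
      (1/2 : ℝ) • ((ω (A₁ x) z • A₂ y + ω (A₂ y) z • A₁ x)
                 - (ω (A₁ y) z • A₂ x + ω (A₂ x) z • A₁ y))) :
    ∀ x y z, Rm x y z + Rm y z x + Rm z x y = 0 := by
  have h₁ := LinearMap.IsAlt.apply_comm_of_skew hωalt hA₁
  have h₂ := LinearMap.IsAlt.apply_comm_of_skew hωalt hA₂
  intro x y z
  simp only [hRm]
  -- With both symmetric forms in a fixed argument order the cyclic sum cancels termwise.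
  rw [h₁ y x, h₂ y x, h₁ z x, h₂ z x, h₁ z y, h₂ z y]
  match_scalars <;> ring

/-- For `A₁, A₂ ∈ sp(p,ω)`, the map
`R_{A₁∧A₂}(x,y) := ½((A₁x) ∘ (A₂y) − (A₁y) ∘ (A₂x))`, where
`(u ∘ v)(z) = ω(u,z)v + ω(v,z)u`, satisfies the first Bianchi identity. -/
theorem stmt3
    {p : Type*} [AddCommGroup p] [Module ℝ p] [FiniteDimensional ℝ p]
    (ω : p →ₗ[ℝ] p →ₗ[ℝ] ℝ)
    (hωalt : ∀ v, ω v v = 0)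
    (hωnd : ∀ v, (∀ w, ω v w = 0) → v = 0)
    (A₁ A₂ : Module.End ℝ p)
    (hA₁ : ∀ u v, ω (A₁ u) v + ω u (A₁ v) = 0)
    (hA₂ : ∀ u v, ω (A₂ u) v + ω u (A₂ v) = 0)
    (Rm : p → p → p → p)
    (hRm : ∀ x y z, Rm x y z =
      (1/2 : ℝ) • ((ω (A₁ x) z • A₂ y + ω (A₂ y) z • A₁ x)
                 - (ω (A₁ y) z • A₂ x + ω (A₂ x) z • A₁ y))) :
    ∀ x y z, Rm x y z + Rm y z x + Rm z x y = 0 :=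
  stmt3_general ω hωalt A₁ A₂ hA₁ hA₂ Rm hRm
end

section
/- Let di = Λ + τ: g → asp(V,Ω) be an extrinsic symplectic morphism of the symmetric pair g = k ⊕ p, with Ω-orthogonal decomposition V = W₁ ⊕ W₂ where τ: p → W₁ is an isomorphism, and set ω := τ*(Ω) on p. Define 𝒜: W₂ → End(p) by τ(𝒜(ξ)(x)) := Λ(x)ξ ∈ W₁ (this is well-defined since Λ(x)(W₂) ⊆ W₁). Then 𝒜(ξ) ∈ sp(p, ω) for every ξ ∈ W₂, i.e., ω(𝒜(ξ)x, y) + ω(x, 𝒜(ξ)y) = 0 for all x, y ∈ p. -/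
/-- For an extrinsic symplectic morphism `di = Λ + τ : g → asp(V,Ω)` of a
symmetric pair `g = k ⊕ p` with orthogonal splitting `V = W₁ ⊕ W₂`, the map
`𝒜 : W₂ → End(p)` defined by `τ(𝒜(ξ)x) = Λ(x)ξ` takes values in `sp(p, ω)` where
`ω = τ*(Ω)`: for all `ξ ∈ W₂` and `x, y ∈ p`, `ω(𝒜(ξ)x, y) + ω(x, 𝒜(ξ)y) = 0`,
i.e. `Ω(Λ(x)ξ, τ(y)) + Ω(τ(x), Λ(y)ξ) = 0`. -/
theorem stmt9
    {g : Type*} [LieRing g] [LieAlgebra ℝ g]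
    (k p : Submodule ℝ g)
    (hcompl : IsCompl k p)
    (hkk : ∀ x ∈ k, ∀ y ∈ k, ⁅x, y⁆ ∈ k)
    (hkp : ∀ x ∈ k, ∀ y ∈ p, ⁅x, y⁆ ∈ p)
    (hpp : ∀ x ∈ p, ∀ y ∈ p, ⁅x, y⁆ ∈ k)
    {V : Type*} [AddCommGroup V] [Module ℝ V] [FiniteDimensional ℝ V]
    (Ω : V →ₗ[ℝ] V →ₗ[ℝ] ℝ)
    (hΩalt : ∀ v, Ω v v = 0)
    (hΩnd : ∀ v, (∀ w, Ω v w = 0) → v = 0)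
    (Λ : g →ₗ[ℝ] Module.End ℝ V) (τ : g →ₗ[ℝ] V)
    (hskew : ∀ z u v, Ω (Λ z u) v + Ω u (Λ z v) = 0)
    (hhomΛ : ∀ x y, Λ ⁅x, y⁆ = ⁅Λ x, Λ y⁆)
    (hhomτ : ∀ x y, τ ⁅x, y⁆ = Λ x (τ y) - Λ y (τ x))
    (W₁ W₂ : Submodule ℝ V)
    (hVcompl : IsCompl W₁ W₂)
    (horth : ∀ x ∈ W₁, ∀ y ∈ W₂, Ω x y = 0)
    (hker : LinearMap.ker τ = k)
    (hτp : Submodule.map τ p = W₁)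
    (hΛk : ∀ z ∈ k, (∀ w ∈ W₁, Λ z w ∈ W₁) ∧ (∀ w ∈ W₂, Λ z w ∈ W₂))
    (hΛp : ∀ z ∈ p, (∀ w ∈ W₁, Λ z w ∈ W₂) ∧ (∀ w ∈ W₂, Λ z w ∈ W₁)) :
    ∀ ξ ∈ W₂, ∀ x ∈ p, ∀ y ∈ p, Ω (Λ x ξ) (τ y) + Ω (τ x) (Λ y ξ) = 0 := by
  intro ξ hξ x hx y hy
  -- Ω is antisymmetric
  have hanti : ∀ u v, Ω u v = - Ω v u := by
    intro u v
    have h := hΩalt (u + v)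
    simp [map_add, LinearMap.add_apply, hΩalt] at h
    linarith
  -- τ⁅x,y⁆ = 0 since ⁅x,y⁆ ∈ k = ker τ
  have hτbr : τ ⁅x, y⁆ = 0 := by
    have : ⁅x, y⁆ ∈ k := hpp x hx y hy
    rw [← hker] at this
    exact this
  have h1 : Ω (Λ x ξ) (τ y) = Ω (Λ x (τ y)) ξ := by
    have := hskew x (τ y) ξ
    rw [hanti (Λ x ξ) (τ y)]
    linarith
  have h2 : Ω (τ x) (Λ y ξ) = - Ω (Λ y (τ x)) ξ := by
    have := hskew y (τ x) ξ
    linarith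
  have h3 : Ω (Λ x (τ y)) ξ - Ω (Λ y (τ x)) ξ = Ω (τ ⁅x, y⁆) ξ := by
    rw [hhomτ x y]
    simp [map_sub, LinearMap.sub_apply]
  rw [h1, h2, hτbr] at *
  simp at h3
  linarith
end

section
/- With the setup of an extrinsic symplectic morphism di = Λ + τ: g → asp(V,Ω) and the map 𝒜: W₂ → sp(p,ω) defined by τ(𝒜(ξ)x) = Λ(x)ξ, the map 𝒜 is k-equivariant: for all k ∈ k and ξ ∈ W₂, 𝒜(Λ(k)ξ) = [ad_k|_p, 𝒜(ξ)], where ad_k|_p denotes the action of k on p (equivalently [k, 𝒜(ξ)] using the representation of k on p via the bracket). -/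
/-! Since `τ` is injective on `p` (its kernel is the complement `k`), both sides are determined
by their images under `τ`. For `kk ∈ k = ker τ` the cocycle identity for `τ` reads
`τ ⁅kk, y⁆ = Λ kk (τ y)`, and the homomorphism property of `Λ` gives
`Λ x (Λ kk ξ) = Λ kk (Λ x ξ) - Λ ⁅kk, x⁆ ξ`; these are exactly the images of the two sides. -/

section SymplecticMorphism

variable {R g V : Type*} [CommRing R] [LieRing g] [AddCommGroup V] [Module R V]
  (Λ : g → Module.End R V)

theorem map_lie_of_map_eq_zero (τ : g → V) (hhomτ : ∀ x y, τ ⁅x, y⁆ = Λ x (τ y) - Λ y (τ x))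
    {z : g} (hz : τ z = 0) (y : g) : τ ⁅z, y⁆ = Λ z (τ y) := by
  rw [hhomτ, hz, map_zero, sub_zero]

theorem apply_apply_eq_sub_apply_lie (hhomΛ : ∀ x y, Λ ⁅x, y⁆ = ⁅Λ x, Λ y⁆) (z x : g) (v : V) :
    Λ x (Λ z v) = Λ z (Λ x v) - Λ ⁅z, x⁆ v := by
  rw [hhomΛ, Ring.lie_def, LinearMap.sub_apply, Module.End.mul_apply, Module.End.mul_apply,
    sub_sub_cancel]

end SymplecticMorphism

theorem stmt10_general
    {g : Type*} [LieRing g] [LieAlgebra ℝ g]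
    (k p : Submodule ℝ g)
    (hcompl : IsCompl k p)
    (hkp : ∀ x ∈ k, ∀ y ∈ p, ⁅x, y⁆ ∈ p)
    {V : Type*} [AddCommGroup V] [Module ℝ V]
    (Λ : g →ₗ[ℝ] Module.End ℝ V) (τ : g →ₗ[ℝ] V)
    (hhomΛ : ∀ x y, Λ ⁅x, y⁆ = ⁅Λ x, Λ y⁆)
    (hhomτ : ∀ x y, τ ⁅x, y⁆ = Λ x (τ y) - Λ y (τ x))
    (hker : LinearMap.ker τ = k)
    (kk : g) (hkkk : kk ∈ k) (ξ : V)
    (aξ : g → g)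
    (haξ : ∀ x ∈ p, aξ x ∈ p ∧ τ (aξ x) = Λ x ξ)
    (aξ' : g → g)
    (haξ' : ∀ x ∈ p, aξ' x ∈ p ∧ τ (aξ' x) = Λ x (Λ kk ξ)) :
    ∀ x ∈ p, aξ' x = ⁅kk, aξ x⁆ - aξ ⁅kk, x⁆ := by
  intro x hx
  have hτkk : τ kk = 0 := LinearMap.mem_ker.mp (hker ▸ hkkk)
  have hτinj : Set.InjOn τ p :=
    LinearMap.disjoint_ker_iff_injOn.mp (hker ▸ hcompl.disjoint.symm)
  obtain ⟨hax, hτax⟩ := haξ x hx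
  obtain ⟨hakx, hτakx⟩ := haξ _ (hkp kk hkkk x hx)
  obtain ⟨ha'x, hτa'x⟩ := haξ' x hx
  refine hτinj ha'x (sub_mem (hkp kk hkkk _ hax) hakx) ?_
  rw [hτa'x, map_sub, map_lie_of_map_eq_zero Λ τ hhomτ hτkk, hτax, hτakx,
    apply_apply_eq_sub_apply_lie Λ hhomΛ]

/-- The map `𝒜 : W₂ → sp(p,ω)`, defined by `τ(𝒜(ξ)x) = Λ(x)ξ`, is
`k`-equivariant: `𝒜(Λ(k)ξ) = [ad_k|_p, 𝒜(ξ)]` for `k ∈ k`, `ξ ∈ W₂`.  Here `aξ` and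
`aξ'` represent the endomorphisms `𝒜(ξ)` and `𝒜(Λ(kk)ξ)` of `p` via their defining
property, and `[ad_kk, 𝒜(ξ)](x) = ⁅kk, aξ x⁆ − aξ ⁅kk, x⁆`. -/
theorem stmt10
    {g : Type*} [LieRing g] [LieAlgebra ℝ g]
    (k p : Submodule ℝ g)
    (hcompl : IsCompl k p)
    (hkk : ∀ x ∈ k, ∀ y ∈ k, ⁅x, y⁆ ∈ k)
    (hkp : ∀ x ∈ k, ∀ y ∈ p, ⁅x, y⁆ ∈ p)
    (hpp : ∀ x ∈ p, ∀ y ∈ p, ⁅x, y⁆ ∈ k)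
    {V : Type*} [AddCommGroup V] [Module ℝ V] [FiniteDimensional ℝ V]
    (Ω : V →ₗ[ℝ] V →ₗ[ℝ] ℝ)
    (hΩalt : ∀ v, Ω v v = 0)
    (hΩnd : ∀ v, (∀ w, Ω v w = 0) → v = 0)
    (Λ : g →ₗ[ℝ] Module.End ℝ V) (τ : g →ₗ[ℝ] V)
    (hskew : ∀ z u v, Ω (Λ z u) v + Ω u (Λ z v) = 0)
    (hhomΛ : ∀ x y, Λ ⁅x, y⁆ = ⁅Λ x, Λ y⁆)
    (hhomτ : ∀ x y, τ ⁅x, y⁆ = Λ x (τ y) - Λ y (τ x))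
    (W₁ W₂ : Submodule ℝ V)
    (hVcompl : IsCompl W₁ W₂)
    (horth : ∀ x ∈ W₁, ∀ y ∈ W₂, Ω x y = 0)
    (hker : LinearMap.ker τ = k)
    (hτp : Submodule.map τ p = W₁)
    (hΛk : ∀ z ∈ k, (∀ w ∈ W₁, Λ z w ∈ W₁) ∧ (∀ w ∈ W₂, Λ z w ∈ W₂))
    (hΛp : ∀ z ∈ p, (∀ w ∈ W₁, Λ z w ∈ W₂) ∧ (∀ w ∈ W₂, Λ z w ∈ W₁))
    (kk : g) (hkkk : kk ∈ k) (ξ : V) (hξ : ξ ∈ W₂)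
    (aξ : g → g)
    (haξ : ∀ x ∈ p, aξ x ∈ p ∧ τ (aξ x) = Λ x ξ)
    (aξ' : g → g)
    (haξ' : ∀ x ∈ p, aξ' x ∈ p ∧ τ (aξ' x) = Λ x (Λ kk ξ)) :
    ∀ x ∈ p, aξ' x = ⁅kk, aξ x⁆ - aξ ⁅kk, x⁆ :=
  stmt10_general k p hcompl hkp Λ τ hhomΛ hhomτ hker kk hkkk ξ aξ haξ aξ' haξ'
end

section
/- Let di = Λ + τ: g → asp(V,Ω) be an extrinsic symplectic morphism with splitting V = W₁ ⊕ W₂. Then the subspace W₁ ⊕ W₂', where W₂' := span{Λ(x)τ(y) : x, y ∈ p}, is invariant under Λ(z) for every z ∈ g, and contains τ(g). Consequently, di(g) ⊆ stab(W₁ ⊕ W₂') := {A + v ∈ asp(V,Ω) : v ∈ W₁ ⊕ W₂', A(W₁ ⊕ W₂') ⊆ W₁ ⊕ W₂'}. -/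
/-!
Write `W₂' = span {Λ(x) τ(y) : x, y ∈ p}`. Since `τ(p) = W₁`, an operator `Λ(z)` with `z ∈ p`
carries `W₁` into `W₂'` by definition, and carries `W₂' ⊆ W₂` back into `W₁`. For `z ∈ k`, the
identity `Λ(z)Λ(x)τ(y) = Λ([z,x])τ(y) + Λ(x)Λ(z)τ(y)` together with `[k,p] ⊆ p` and
`Λ(k)W₁ ⊆ W₁ = τ(p)` shows that `Λ(z)` preserves `W₂'`. As `g = k ⊕ p`, the elements `z` with
`Λ(z)` preserving `W₁ ⊕ W₂'` form a subspace containing `k` and `p`, hence all of `g`; and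
`τ(g) = τ(p) = W₁` because `k = ker τ`.
-/

open Submodule

section

variable {R g V : Type*} [CommRing R] [LieRing g] [LieAlgebra R g] [AddCommGroup V] [Module R V]
  (p : Submodule R g) (Λ : g →ₗ[R] Module.End R V) (τ : g →ₗ[R] V)

/-- The subspace `W₂'` of the paper. -/
def lambdaTauSpan : Submodule R V :=
  span R {v | ∃ x ∈ p, ∃ y ∈ p, v = Λ x (τ y)}

variable {p Λ τ}

lemma apply_mem_lambdaTauSpan {x y : g} (hx : x ∈ p) (hy : y ∈ p) :
    Λ x (τ y) ∈ lambdaTauSpan p Λ τ :=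
  subset_span ⟨x, hx, y, hy, rfl⟩

lemma lambdaTauSpan_le {W : Submodule R V} (h : ∀ x ∈ p, ∀ y ∈ p, Λ x (τ y) ∈ W) :
    lambdaTauSpan p Λ τ ≤ W :=
  span_le.2 <| by rintro _ ⟨x, hx, y, hy, rfl⟩; exact h x hx y hy

lemma map_le_comap_lambdaTauSpan {z : g} (hz : z ∈ p) :
    p.map τ ≤ (lambdaTauSpan p Λ τ).comap (Λ z) := by
  rintro _ ⟨y, hy, rfl⟩
  exact apply_mem_lambdaTauSpan hz hy

lemma lambdaTauSpan_le_comap_map {W₂ : Submodule R V}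
    (hp : ∀ x ∈ p, ∀ w ∈ p.map τ, Λ x w ∈ W₂) {z : g} (hz : ∀ w ∈ W₂, Λ z w ∈ p.map τ) :
    lambdaTauSpan p Λ τ ≤ (p.map τ).comap (Λ z) :=
  lambdaTauSpan_le fun x hx _ hy ↦ hz _ (hp x hx _ (mem_map_of_mem hy))

lemma lambdaTauSpan_le_comap_self (hΛ : ∀ x y, Λ ⁅x, y⁆ = ⁅Λ x, Λ y⁆) {z : g}
    (hzp : ∀ x ∈ p, ⁅z, x⁆ ∈ p) (hzτ : ∀ w ∈ p.map τ, Λ z w ∈ p.map τ) :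
    lambdaTauSpan p Λ τ ≤ (lambdaTauSpan p Λ τ).comap (Λ z) :=
  lambdaTauSpan_le fun x hx y hy ↦ by
    obtain ⟨y', hy', hzy⟩ := hzτ _ (mem_map_of_mem hy)
    have hcomm : Λ z (Λ x (τ y)) = Λ ⁅z, x⁆ (τ y) + Λ x (τ y') := by
      rw [hΛ, Ring.lie_def, hzy]
      simp
    rw [mem_comap, hcomm]
    exact add_mem (apply_mem_lambdaTauSpan (hzp x hx) hy) (apply_mem_lambdaTauSpan hx hy')

lemma sup_lambdaTauSpan_le_comap_of_swap {W₂ : Submodule R V}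
    (hp : ∀ x ∈ p, (∀ w ∈ p.map τ, Λ x w ∈ W₂) ∧ (∀ w ∈ W₂, Λ x w ∈ p.map τ))
    {z : g} (hz : z ∈ p) :
    p.map τ ⊔ lambdaTauSpan p Λ τ ≤ (p.map τ ⊔ lambdaTauSpan p Λ τ).comap (Λ z) :=
  sup_le ((map_le_comap_lambdaTauSpan hz).trans (comap_mono le_sup_right))
    ((lambdaTauSpan_le_comap_map (fun x hx ↦ (hp x hx).1) (hp z hz).2).trans
      (comap_mono le_sup_left))

lemma sup_lambdaTauSpan_le_comap_of_preserve (hΛ : ∀ x y, Λ ⁅x, y⁆ = ⁅Λ x, Λ y⁆) {z : g}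
    (hzp : ∀ x ∈ p, ⁅z, x⁆ ∈ p) (hzτ : ∀ w ∈ p.map τ, Λ z w ∈ p.map τ) :
    p.map τ ⊔ lambdaTauSpan p Λ τ ≤ (p.map τ ⊔ lambdaTauSpan p Λ τ).comap (Λ z) :=
  sup_le ((map_le_iff_le_comap.1 fun _ ⟨w, hw, hzw⟩ ↦ hzw ▸ hzτ w hw).trans
      (comap_mono le_sup_left))
    ((lambdaTauSpan_le_comap_self hΛ hzp hzτ).trans (comap_mono le_sup_right))

end

theorem stmt12_general
    {g : Type*} [LieRing g] [LieAlgebra ℝ g]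
    (k p : Submodule ℝ g)
    (hcompl : IsCompl k p)
    (hkp : ∀ x ∈ k, ∀ y ∈ p, ⁅x, y⁆ ∈ p)
    {V : Type*} [AddCommGroup V] [Module ℝ V]
    (Λ : g →ₗ[ℝ] Module.End ℝ V) (τ : g →ₗ[ℝ] V)
    (hhomΛ : ∀ x y, Λ ⁅x, y⁆ = ⁅Λ x, Λ y⁆)
    (W₁ W₂ : Submodule ℝ V)
    (hker : LinearMap.ker τ = k)
    (hτp : Submodule.map τ p = W₁)
    (hΛk : ∀ z ∈ k, (∀ w ∈ W₁, Λ z w ∈ W₁) ∧ (∀ w ∈ W₂, Λ z w ∈ W₂))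
    (hΛp : ∀ z ∈ p, (∀ w ∈ W₁, Λ z w ∈ W₂) ∧ (∀ w ∈ W₂, Λ z w ∈ W₁)) :
    (∀ z : g, ∀ v ∈ W₁ ⊔ Submodule.span ℝ {v : V | ∃ x ∈ p, ∃ y ∈ p, v = Λ x (τ y)},
        Λ z v ∈ W₁ ⊔ Submodule.span ℝ {v : V | ∃ x ∈ p, ∃ y ∈ p, v = Λ x (τ y)}) ∧
    (∀ z : g, τ z ∈ W₁ ⊔ Submodule.span ℝ {v : V | ∃ x ∈ p, ∃ y ∈ p, v = Λ x (τ y)}) := by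
  subst hτp
  set S := p.map τ ⊔ lambdaTauSpan p Λ τ
  have hstab : (compatibleMaps S S).comap Λ = ⊤ :=
    eq_top_iff.2 <| hcompl.sup_eq_top ▸ sup_le
      (fun z hz ↦ sup_lambdaTauSpan_le_comap_of_preserve hhomΛ (hkp z hz) (hΛk z hz).1)
      (fun z hz ↦ sup_lambdaTauSpan_le_comap_of_swap hΛp hz)
  have hτ : S.comap τ = ⊤ :=
    eq_top_iff.2 <| hcompl.sup_eq_top ▸ sup_le
      (hker ▸ LinearMap.ker_le_comap τ)
      ((le_comap_map τ p).trans (comap_mono le_sup_left))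
  exact ⟨fun z v hv ↦ (hstab ▸ mem_top : z ∈ (compatibleMaps S S).comap Λ) hv,
    fun z ↦ (hτ ▸ mem_top : z ∈ S.comap τ)⟩

/-- With `W₂' := span{Λ(x)τ(y) : x, y ∈ p}`, the subspace `W₁ ⊕ W₂'`
is invariant under `Λ(z)` for every `z ∈ g` and contains `τ(g)`; hence
`di(g) ⊆ stab(W₁ ⊕ W₂')`. -/
theorem stmt12
    {g : Type*} [LieRing g] [LieAlgebra ℝ g]
    (k p : Submodule ℝ g)
    (hcompl : IsCompl k p)
    (hkk : ∀ x ∈ k, ∀ y ∈ k, ⁅x, y⁆ ∈ k)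
    (hkp : ∀ x ∈ k, ∀ y ∈ p, ⁅x, y⁆ ∈ p)
    (hpp : ∀ x ∈ p, ∀ y ∈ p, ⁅x, y⁆ ∈ k)
    {V : Type*} [AddCommGroup V] [Module ℝ V] [FiniteDimensional ℝ V]
    (Ω : V →ₗ[ℝ] V →ₗ[ℝ] ℝ)
    (hΩalt : ∀ v, Ω v v = 0)
    (hΩnd : ∀ v, (∀ w, Ω v w = 0) → v = 0)
    (Λ : g →ₗ[ℝ] Module.End ℝ V) (τ : g →ₗ[ℝ] V)
    (hskew : ∀ z u v, Ω (Λ z u) v + Ω u (Λ z v) = 0)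
    (hhomΛ : ∀ x y, Λ ⁅x, y⁆ = ⁅Λ x, Λ y⁆)
    (hhomτ : ∀ x y, τ ⁅x, y⁆ = Λ x (τ y) - Λ y (τ x))
    (W₁ W₂ : Submodule ℝ V)
    (hVcompl : IsCompl W₁ W₂)
    (horth : ∀ x ∈ W₁, ∀ y ∈ W₂, Ω x y = 0)
    (hker : LinearMap.ker τ = k)
    (hτp : Submodule.map τ p = W₁)
    (hΛk : ∀ z ∈ k, (∀ w ∈ W₁, Λ z w ∈ W₁) ∧ (∀ w ∈ W₂, Λ z w ∈ W₂))
    (hΛp : ∀ z ∈ p, (∀ w ∈ W₁, Λ z w ∈ W₂) ∧ (∀ w ∈ W₂, Λ z w ∈ W₁)) :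
    (∀ z : g, ∀ v ∈ W₁ ⊔ Submodule.span ℝ {v : V | ∃ x ∈ p, ∃ y ∈ p, v = Λ x (τ y)},
        Λ z v ∈ W₁ ⊔ Submodule.span ℝ {v : V | ∃ x ∈ p, ∃ y ∈ p, v = Λ x (τ y)}) ∧
    (∀ z : g, τ z ∈ W₁ ⊔ Submodule.span ℝ {v : V | ∃ x ∈ p, ∃ y ∈ p, v = Λ x (τ y)}) :=
  stmt12_general k p hcompl hkp Λ τ hhomΛ W₁ W₂ hker hτp hΛk hΛp
end

section
/- Let k ⊆ sp(p,ω) be a Lie subalgebra and R: p × p → k a k-equivariant alternating bilinear map satisfying the first Bianchi identity R(x,y)z + R(y,z)x + R(z,x)y = 0 (where k acts on p by applying endomorphisms). Then the vector space g := k ⊕ p, with bracket defined by [k₁,k₂] := [k₁,k₂]_{sp}, [k,x] := k(x) = −[x,k], and [x,y] := −R(x,y) for k, k₁, k₂ ∈ k and x, y ∈ p, is a Lie algebra (i.e., the Jacobi identity holds), and g = k ⊕ p is a symmetric pair. -/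
/-!
Split each component of the Jacobi identity of `k ⊕ p` into its part built from `k` alone and its
part involving `R`. The former vanish because `Module.End ℝ p` is a Lie algebra acting on `p`.
In the `k`-component the curvature terms cancel in pairs, once `⁅K, R x y⁆` is expanded by
equivariance and `R` is antisymmetric; in the `p`-component they form the cyclic sum of the
first Bianchi identity.
-/

section CurvatureBracket

variable {𝕜 M : Type*} [CommRing 𝕜] [AddCommGroup M] [Module 𝕜 M]

-- `Module.End` has the commutator bracket but no global `LieRing` instance.
attribute [local instance] LieRing.ofAssociativeRing

def IsEquivariant (R : M →ₗ[𝕜] M →ₗ[𝕜] Module.End 𝕜 M) (K : Module.End 𝕜 M) : Prop :=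
  ∀ x y, ⁅K, R x y⁆ = R (K x) y + R x (K y)

theorem lie_lie_add_lie_lie_add_lie_lie {L : Type*} [LieRing L] (a b c : L) :
    ⁅⁅a, b⁆, c⁆ + ⁅⁅b, c⁆, a⁆ + ⁅⁅c, a⁆, b⁆ = 0 := by
  rw [← lie_skew ⁅a, b⁆, ← lie_skew ⁅b, c⁆, ← lie_skew ⁅c, a⁆, ← neg_add, ← neg_add, neg_eq_zero]
  exact lie_jacobi c a b

theorem Module.End.lie_apply_sub_apply_cyclic (K₁ K₂ K₃ : Module.End 𝕜 M) (x₁ x₂ x₃ : M) :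
    (⁅K₁, K₂⁆ x₃ - K₃ (K₁ x₂ - K₂ x₁)) + (⁅K₂, K₃⁆ x₁ - K₁ (K₂ x₃ - K₃ x₂))
      + (⁅K₃, K₁⁆ x₂ - K₂ (K₃ x₁ - K₁ x₃)) = 0 := by
  simp only [Ring.lie_def, LinearMap.sub_apply, Module.End.mul_apply, map_sub]
  abel

variable {R : M →ₗ[𝕜] M →ₗ[𝕜] Module.End 𝕜 M}

theorem IsEquivariant.apply_sub_apply_add_lie_cyclic (hR : R.IsAlt) {K₁ K₂ K₃ : Module.End 𝕜 M}
    (h₁ : IsEquivariant R K₁) (h₂ : IsEquivariant R K₂) (h₃ : IsEquivariant R K₃)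
    (x₁ x₂ x₃ : M) :
    (R (K₁ x₂ - K₂ x₁) x₃ + ⁅R x₁ x₂, K₃⁆) + (R (K₂ x₃ - K₃ x₂) x₁ + ⁅R x₂ x₃, K₁⁆)
      + (R (K₃ x₁ - K₁ x₃) x₂ + ⁅R x₃ x₁, K₂⁆) = 0 := by
  rw [← lie_skew (R x₁ x₂), ← lie_skew (R x₂ x₃), ← lie_skew (R x₃ x₁), h₁, h₂, h₃,
    ← hR.neg (K₁ x₃) x₂, ← hR.neg (K₂ x₁) x₃, ← hR.neg (K₃ x₂) x₁]
  simp only [map_sub, LinearMap.sub_apply]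
  abel

theorem curvature_jacobi_lie_component (hR : R.IsAlt) {K₁ K₂ K₃ : Module.End 𝕜 M}
    (h₁ : IsEquivariant R K₁) (h₂ : IsEquivariant R K₂) (h₃ : IsEquivariant R K₃)
    (x₁ x₂ x₃ : M) :
    (⁅⁅K₁, K₂⁆ - R x₁ x₂, K₃⁆ - R (K₁ x₂ - K₂ x₁) x₃)
      + (⁅⁅K₂, K₃⁆ - R x₂ x₃, K₁⁆ - R (K₂ x₃ - K₃ x₂) x₁)
      + (⁅⁅K₃, K₁⁆ - R x₃ x₁, K₂⁆ - R (K₃ x₁ - K₁ x₃) x₂) = 0 := by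
  have hJacobi := lie_lie_add_lie_lie_add_lie_lie K₁ K₂ K₃
  have hCurv := h₁.apply_sub_apply_add_lie_cyclic hR h₂ h₃ x₁ x₂ x₃
  simp only [sub_lie]
  calc _ = (⁅⁅K₁, K₂⁆, K₃⁆ + ⁅⁅K₂, K₃⁆, K₁⁆ + ⁅⁅K₃, K₁⁆, K₂⁆)
        - ((R (K₁ x₂ - K₂ x₁) x₃ + ⁅R x₁ x₂, K₃⁆) + (R (K₂ x₃ - K₃ x₂) x₁ + ⁅R x₂ x₃, K₁⁆)
          + (R (K₃ x₁ - K₁ x₃) x₂ + ⁅R x₃ x₁, K₂⁆)) := by abel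
    _ = 0 := by rw [hJacobi, hCurv, sub_zero]

theorem curvature_jacobi_module_component (K₁ K₂ K₃ : Module.End 𝕜 M) (x₁ x₂ x₃ : M)
    (hBianchi : R x₁ x₂ x₃ + R x₂ x₃ x₁ + R x₃ x₁ x₂ = 0) :
    ((⁅K₁, K₂⁆ - R x₁ x₂) x₃ - K₃ (K₁ x₂ - K₂ x₁))
      + ((⁅K₂, K₃⁆ - R x₂ x₃) x₁ - K₁ (K₂ x₃ - K₃ x₂))
      + ((⁅K₃, K₁⁆ - R x₃ x₁) x₂ - K₂ (K₃ x₁ - K₁ x₃)) = 0 := by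
  have hEnd := Module.End.lie_apply_sub_apply_cyclic K₁ K₂ K₃ x₁ x₂ x₃
  simp only [LinearMap.sub_apply]
  calc _ = ((⁅K₁, K₂⁆ x₃ - K₃ (K₁ x₂ - K₂ x₁)) + (⁅K₂, K₃⁆ x₁ - K₁ (K₂ x₃ - K₃ x₂))
        + (⁅K₃, K₁⁆ x₂ - K₂ (K₃ x₁ - K₁ x₃)))
        - (R x₁ x₂ x₃ + R x₂ x₃ x₁ + R x₃ x₁ x₂) := by abel
    _ = 0 := by rw [hEnd, hBianchi, sub_zero]

end CurvatureBracket

theorem stmt16_general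
    {p : Type*} [AddCommGroup p] [Module ℝ p]
    (k : Submodule ℝ (Module.End ℝ p))
    (hkcl : ∀ K ∈ k, ∀ L ∈ k, ⁅K, L⁆ ∈ k)
    (R : p →ₗ[ℝ] p →ₗ[ℝ] Module.End ℝ p)
    (hRk : ∀ x y, R x y ∈ k)
    (hRalt : ∀ x, R x x = 0)
    (hBianchi : ∀ x y z, R x y z + R y z x + R z x y = 0)
    (hequiv : ∀ K ∈ k, ∀ x y, ⁅K, R x y⁆ = R (K x) y + R x (K y)) :
    ∀ K₁ ∈ k, ∀ K₂ ∈ k, ∀ K₃ ∈ k, ∀ x₁ x₂ x₃ : p,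
      -- the bracket is closed: its `k`-component lies in `k` (the `p`-component
      -- `K₁x₂ − K₂x₁` lies in `p` trivially), so `[k,k] ⊆ k`, `[k,p] ⊆ p`, `[p,p] ⊆ k`;
      (⁅K₁, K₂⁆ - R x₁ x₂ ∈ k) ∧
      -- `k`-component of the Jacobi identity `[[a,b],c] + [[b,c],a] + [[c,a],b] = 0`:
      ((⁅⁅K₁, K₂⁆ - R x₁ x₂, K₃⁆ - R (K₁ x₂ - K₂ x₁) x₃)
        + (⁅⁅K₂, K₃⁆ - R x₂ x₃, K₁⁆ - R (K₂ x₃ - K₃ x₂) x₁)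
        + (⁅⁅K₃, K₁⁆ - R x₃ x₁, K₂⁆ - R (K₃ x₁ - K₁ x₃) x₂) = 0) ∧
      -- `p`-component of the Jacobi identity:
      (((⁅K₁, K₂⁆ - R x₁ x₂) x₃ - K₃ (K₁ x₂ - K₂ x₁))
        + ((⁅K₂, K₃⁆ - R x₂ x₃) x₁ - K₁ (K₂ x₃ - K₃ x₂))
        + ((⁅K₃, K₁⁆ - R x₃ x₁) x₂ - K₂ (K₃ x₁ - K₁ x₃)) = 0) := by
  intro K₁ hK₁ K₂ hK₂ K₃ hK₃ x₁ x₂ x₃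
  exact ⟨sub_mem (hkcl K₁ hK₁ K₂ hK₂) (hRk x₁ x₂),
    curvature_jacobi_lie_component hRalt (hequiv K₁ hK₁) (hequiv K₂ hK₂) (hequiv K₃ hK₃) x₁ x₂ x₃,
    curvature_jacobi_module_component K₁ K₂ K₃ x₁ x₂ x₃ (hBianchi x₁ x₂ x₃)⟩

/-- Let `k ⊆ sp(p,ω)` be a Lie subalgebra and `R : p × p → k` a
`k`-equivariant alternating bilinear map satisfying the first Bianchi identity.  Then
`g := k ⊕ p` with bracket `[K,L] := ⁅K,L⁆`, `[K,x] := K(x) = −[x,K]`, `[x,y] := −R(x,y)`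
is a Lie algebra (the bracket is closed and the Jacobi identity holds componentwise),
and `g = k ⊕ p` is a symmetric pair.  The bracket of `(K₁,x₁)` and `(K₂,x₂)` is
`(⁅K₁,K₂⁆ − R(x₁,x₂), K₁x₂ − K₂x₁)`. -/
theorem stmt16
    {p : Type*} [AddCommGroup p] [Module ℝ p] [FiniteDimensional ℝ p]
    (ω : p →ₗ[ℝ] p →ₗ[ℝ] ℝ)
    (hωalt : ∀ v, ω v v = 0)
    (hωnd : ∀ v, (∀ w, ω v w = 0) → v = 0)
    (k : Submodule ℝ (Module.End ℝ p))
    (hksk : ∀ K ∈ k, ∀ u v, ω (K u) v + ω u (K v) = 0)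
    (hkcl : ∀ K ∈ k, ∀ L ∈ k, ⁅K, L⁆ ∈ k)
    (R : p →ₗ[ℝ] p →ₗ[ℝ] Module.End ℝ p)
    (hRk : ∀ x y, R x y ∈ k)
    (hRalt : ∀ x, R x x = 0)
    (hBianchi : ∀ x y z, R x y z + R y z x + R z x y = 0)
    (hequiv : ∀ K ∈ k, ∀ x y, ⁅K, R x y⁆ = R (K x) y + R x (K y)) :
    ∀ K₁ ∈ k, ∀ K₂ ∈ k, ∀ K₃ ∈ k, ∀ x₁ x₂ x₃ : p,
      -- the bracket is closed: its `k`-component lies in `k` (the `p`-component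
      -- `K₁x₂ − K₂x₁` lies in `p` trivially), so `[k,k] ⊆ k`, `[k,p] ⊆ p`, `[p,p] ⊆ k`;
      (⁅K₁, K₂⁆ - R x₁ x₂ ∈ k) ∧
      -- `k`-component of the Jacobi identity `[[a,b],c] + [[b,c],a] + [[c,a],b] = 0`:
      ((⁅⁅K₁, K₂⁆ - R x₁ x₂, K₃⁆ - R (K₁ x₂ - K₂ x₁) x₃)
        + (⁅⁅K₂, K₃⁆ - R x₂ x₃, K₁⁆ - R (K₂ x₃ - K₃ x₂) x₁)
        + (⁅⁅K₃, K₁⁆ - R x₃ x₁, K₂⁆ - R (K₃ x₁ - K₁ x₃) x₂) = 0) ∧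
      -- `p`-component of the Jacobi identity:
      (((⁅K₁, K₂⁆ - R x₁ x₂) x₃ - K₃ (K₁ x₂ - K₂ x₁))
        + ((⁅K₂, K₃⁆ - R x₂ x₃) x₁ - K₁ (K₂ x₃ - K₃ x₂))
        + ((⁅K₃, K₁⁆ - R x₃ x₁) x₂ - K₂ (K₃ x₁ - K₁ x₃)) = 0) :=
  stmt16_general k hkcl R hRk hRalt hBianchi hequiv
end
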